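/- arXiv:1303.1998 — 5 statements merged into one kernel-verified Lean document; each statement's English description precedes it below -/
import Mathlib

section
/- Let q be a prime power and ℓ ∈ F_q[t] a monic irreducible polynomial. Then the average of the ℓ-adic valuation over nonzero polynomials exists and equals A(v_ℓ(P), {P ∈ F_q[t], P ≠ 0}) = 1/(Norm(ℓ) − 1); that is, lim_{N→∞} (Σ_{P ≠ 0, deg P ≤ N} v_ℓ(P)) / #{P ≠ 0 : deg P ≤ N} = 1/(q^{deg ℓ} − 1). -/
/-! Count by layers: `∑_P v_ℓ(P) = ∑_{k ≥ 1} #{P : ℓ^k ∣ P}`. The nonzero multiples of `ℓ^k` of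
degree `≤ N` are the `ℓ^k Q` with `Q ≠ 0` of degree `≤ N - k deg ℓ`, so there are
`q^(N + 1 - k deg ℓ) - 1` of them. After dividing by the number `q^(N + 1) - 1` of all nonzero
polynomials of degree `≤ N`, the `k`-th layer tends to `q^(-k deg ℓ)` and is bounded by it, so
by dominated convergence (Tannery's theorem) the average tends to
`∑_{k ≥ 1} q^(-k deg ℓ) = 1 / (q^(deg ℓ) - 1)`. -/

open Polynomial Filter Finset Topology

open Classical in
theorem FiniteMultiplicity.multiplicity_eq_card_range_pow_succ_dvd {α : Type*} [Monoid α]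
    {a b : α} (hf : FiniteMultiplicity a b) {n : ℕ} (hn : multiplicity a b ≤ n) :
    multiplicity a b = #{k ∈ range n | a ^ (k + 1) ∣ b} := by
  have : {k ∈ range n | a ^ (k + 1) ∣ b} = range (multiplicity a b) := by
    ext k
    rw [mem_filter, mem_range, mem_range, hf.pow_dvd_iff_le_multiplicity]
    omega
  rw [this, card_range]

namespace Polynomial

theorem finite_degreeLT (R : Type*) [Semiring R] [Finite R] (n : ℕ) :
    (degreeLT R n : Set R[X]).Finite :=
  Set.finite_coe_iff.mp (.of_equiv _ (degreeLTEquiv R n).toEquiv.symm)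

theorem coe_degreeLT_succ {R : Type*} [Semiring R] (n : ℕ) :
    (degreeLT R (n + 1) : Set R[X]) = {P | P.natDegree ≤ n} := by
  ext P
  by_cases hP : P = 0
  · simp [hP]
  · rw [SetLike.mem_coe, mem_degreeLT, ← natDegree_lt_iff_degree_lt hP, Set.mem_ofPred_eq,
      Nat.lt_succ_iff]

theorem setOf_ne_zero_natDegree_le_eq {R : Type*} [Semiring R] (n : ℕ) :
    {P : R[X] | P ≠ 0 ∧ P.natDegree ≤ n} = (degreeLT R (n + 1) : Set R[X]) \ {0} := by
  rw [coe_degreeLT_succ]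
  ext P
  simp only [Set.mem_ofPred_eq, Set.mem_sdiff, Set.mem_singleton_iff]
  tauto

theorem multiplicity_le_natDegree {R : Type*} [CommRing R] [IsDomain R] {ℓ P : R[X]}
    (hℓ : 0 < ℓ.natDegree) (hP : P ≠ 0) : multiplicity ℓ P ≤ P.natDegree :=
  calc multiplicity ℓ P ≤ multiplicity ℓ P * ℓ.natDegree := Nat.le_mul_of_pos_right _ hℓ
    _ = (ℓ ^ multiplicity ℓ P).natDegree := (natDegree_pow ℓ _).symm
    _ ≤ P.natDegree := natDegree_le_of_dvd (pow_multiplicity_dvd ℓ P) hP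

theorem setOf_ne_zero_natDegree_le_dvd_eq_image {R : Type*} [CommRing R] [IsDomain R]
    {g : R[X]} (hg : g ≠ 0) {n : ℕ} (hgn : g.natDegree ≤ n) :
    {P : R[X] | P ≠ 0 ∧ P.natDegree ≤ n ∧ g ∣ P} =
      (g * ·) '' {Q | Q ≠ 0 ∧ Q.natDegree ≤ n - g.natDegree} := by
  ext P
  simp only [Set.mem_ofPred_eq, Set.mem_image]
  constructor
  · rintro ⟨hP, hPn, Q, rfl⟩
    have hQ : Q ≠ 0 := right_ne_zero_of_mul hP
    rw [natDegree_mul hg hQ] at hPn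
    exact ⟨Q, ⟨hQ, by omega⟩, rfl⟩
  · rintro ⟨Q, ⟨hQ, hQn⟩, rfl⟩
    refine ⟨mul_ne_zero hg hQ, ?_, dvd_mul_right g Q⟩
    rw [natDegree_mul hg hQ]
    omega

section FiniteField

variable {K : Type*} [Field K] [Fintype K]

theorem finite_setOf_ne_zero_natDegree_le (n : ℕ) :
    {P : K[X] | P ≠ 0 ∧ P.natDegree ≤ n}.Finite := by
  rw [setOf_ne_zero_natDegree_le_eq]
  exact (finite_degreeLT K _).sdiff

theorem ncard_setOf_ne_zero_natDegree_le (n : ℕ) :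
    {P : K[X] | P ≠ 0 ∧ P.natDegree ≤ n}.ncard = Fintype.card K ^ (n + 1) - 1 := by
  rw [setOf_ne_zero_natDegree_le_eq,
    Set.ncard_sdiff_singleton_of_mem (degreeLT K (n + 1)).zero_mem, ← Nat.card_coe_set_eq,
    SetLike.coe_sort_coe, Nat.card_congr (degreeLTEquiv K (n + 1)).toEquiv]
  simp

/-- The exponent is a truncated subtraction, so the formula also covers `n < g.natDegree`,
where both sides vanish. -/
theorem ncard_setOf_ne_zero_natDegree_le_dvd {g : K[X]} (hg : g ≠ 0) (n : ℕ) :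
    {P : K[X] | P ≠ 0 ∧ P.natDegree ≤ n ∧ g ∣ P}.ncard =
      Fintype.card K ^ (n + 1 - g.natDegree) - 1 := by
  rcases le_or_gt g.natDegree n with hgn | hng
  · rw [setOf_ne_zero_natDegree_le_dvd_eq_image hg hgn,
      Set.ncard_image_of_injective _ (mul_right_injective₀ hg),
      ncard_setOf_ne_zero_natDegree_le, Nat.sub_add_comm hgn]
  · have : {P : K[X] | P ≠ 0 ∧ P.natDegree ≤ n ∧ g ∣ P} = ∅ :=
      Set.eq_empty_of_forall_notMem fun P ⟨hP, hPn, hgP⟩ =>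
        (natDegree_le_of_dvd hgP hP).not_gt (hng.trans_le' hPn)
    rw [this, Set.ncard_empty, Nat.sub_eq_zero_of_le hng, pow_zero, Nat.sub_self]

theorem finsum_multiplicity_setOf_ne_zero_natDegree_le {ℓ : K[X]} (hℓ : Irreducible ℓ)
    (n : ℕ) :
    ∑ᶠ P ∈ {P : K[X] | P ≠ 0 ∧ P.natDegree ≤ n}, multiplicity ℓ P =
      ∑ k ∈ range (n + 1), (Fintype.card K ^ (n + 1 - (k + 1) * ℓ.natDegree) - 1) := by
  classical
  have hS := finite_setOf_ne_zero_natDegree_le (K := K) n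
  have hmult : ∀ P ∈ hS.toFinset,
      multiplicity ℓ P = #{k ∈ range (n + 1) | ℓ ^ (k + 1) ∣ P} := fun P hP => by
    rw [Set.Finite.mem_toFinset] at hP
    exact (FiniteMultiplicity.of_prime_left hℓ.prime hP.1).multiplicity_eq_card_range_pow_succ_dvd
      ((multiplicity_le_natDegree hℓ.natDegree_pos hP.1).trans (hP.2.trans n.le_succ))
  have hlayer : ∀ k, #{P ∈ hS.toFinset | ℓ ^ (k + 1) ∣ P} =
      Fintype.card K ^ (n + 1 - (k + 1) * ℓ.natDegree) - 1 := fun k => by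
    rw [← Set.ncard_coe_finset, ← natDegree_pow,
      ← ncard_setOf_ne_zero_natDegree_le_dvd (pow_ne_zero _ hℓ.ne_zero)]
    congr 1
    ext P
    simp [and_assoc]
  rw [finsum_mem_eq_finite_toFinset_sum _ hS, sum_congr rfl hmult]
  simp_rw [card_filter]
  rw [sum_comm]
  simp_rw [← card_filter, hlayer]

end FiniteField

end Polynomial

theorem tendsto_mul_sub_one_div_sub_one {α : Type*} {l : Filter α} {t : α → ℝ}
    (ht : Tendsto t l atTop) (c : ℝ) :
    Tendsto (fun x => (t x * c - 1) / (t x - 1)) l (𝓝 c) := by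
  have hsub : Tendsto (fun x => t x - 1) l atTop := tendsto_atTop_add_const_right l (-1) ht
  have hlim : Tendsto (fun x => c + (c - 1) / (t x - 1)) l (𝓝 c) := by
    simpa using tendsto_const_nhds.add (tendsto_const_nhds.div_atTop hsub)
  refine hlim.congr' ?_
  filter_upwards [hsub.eventually_gt_atTop 0] with x hx
  field_simp
  ring

section PowRatio

variable {q : ℝ}

theorem pow_sub_sub_one_div_nonneg (hq : 1 ≤ q) (m j : ℕ) :
    0 ≤ (q ^ (m - j) - 1) / (q ^ m - 1) :=
  div_nonneg (sub_nonneg.2 (one_le_pow₀ hq)) (sub_nonneg.2 (one_le_pow₀ hq))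

theorem pow_sub_sub_one_div_le (hq : 1 ≤ q) (m j : ℕ) :
    (q ^ (m - j) - 1) / (q ^ m - 1) ≤ q⁻¹ ^ j := by
  have hq0 : q ≠ 0 := by positivity
  rcases le_or_gt j m with hjm | hmj
  · rcases (sub_nonneg.2 (one_le_pow₀ (n := m) hq)).eq_or_lt with h | h
    · rw [← h, div_zero]
      positivity
    rw [div_le_iff₀ h, mul_sub, mul_one, inv_pow, mul_comm, ← pow_sub₀ q hq0 hjm]
    exact sub_le_sub_left (inv_le_one_of_one_le₀ (one_le_pow₀ hq)) _
  · rw [Nat.sub_eq_zero_of_le hmj.le, pow_zero, sub_self, zero_div]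
    positivity

theorem tendsto_pow_sub_sub_one_div (hq : 1 < q) (j : ℕ) :
    Tendsto (fun m : ℕ => (q ^ (m - j) - 1) / (q ^ m - 1)) atTop (𝓝 (q⁻¹ ^ j)) := by
  refine (tendsto_mul_sub_one_div_sub_one (tendsto_pow_atTop_atTop_of_one_lt hq) _).congr' ?_
  filter_upwards [eventually_ge_atTop j] with m hm
  rw [inv_pow, ← pow_sub₀ q (by positivity) hm]

theorem tendsto_sum_range_pow_sub_sub_one_div (hq : 1 < q) {d : ℕ} (hd : 0 < d) :
    Tendsto (fun m : ℕ => (∑ k ∈ range m, (q ^ (m - (k + 1) * d) - 1)) / (q ^ m - 1))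
      atTop (𝓝 (1 / (q ^ d - 1))) := by
  set r := q⁻¹ ^ d with hr
  have hr0 : 0 ≤ r := by positivity
  have hr1 : r < 1 := pow_lt_one₀ (by positivity) (inv_lt_one_of_one_lt₀ hq) hd.ne'
  have hpow : ∀ k : ℕ, q⁻¹ ^ ((k + 1) * d) = r * r ^ k := fun k => by
    rw [mul_comm, pow_mul, pow_succ']
  have hlim := tendsto_tsum_of_dominated_convergence
    (f := fun m k => (q ^ (m - (k + 1) * d) - 1) / (q ^ m - 1))
    ((summable_geometric_of_lt_one hr0 hr1).mul_left r)
    (fun k => hpow k ▸ tendsto_pow_sub_sub_one_div hq _)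
    (Eventually.of_forall fun m k => by
      rw [Real.norm_of_nonneg (pow_sub_sub_one_div_nonneg hq.le _ _), ← hpow]
      exact pow_sub_sub_one_div_le hq.le _ _)
  have hsum : ∑' k, r * r ^ k = 1 / (q ^ d - 1) := by
    have : q ^ d - 1 ≠ 0 := (sub_pos.2 (one_lt_pow₀ hq hd.ne')).ne'
    rw [tsum_mul_left, tsum_geometric_of_lt_one hr0 hr1, hr, inv_pow]
    field_simp
  rw [hsum] at hlim
  refine hlim.congr fun m => ?_
  rw [tsum_eq_sum (s := range m), sum_div]
  intro k hk
  rw [mem_range, not_lt] at hk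
  rw [Nat.sub_eq_zero_of_le (by nlinarith), pow_zero, sub_self, zero_div]

end PowRatio

theorem average_valuation_nonzero_polynomials_general
    (Fq : Type*) [Field Fq] [Fintype Fq]
    (ℓ : Polynomial Fq) (hirr : Irreducible ℓ) :
    Filter.Tendsto
      (fun N : ℕ =>
        (∑ᶠ P ∈ {P : Polynomial Fq | P ≠ 0 ∧ P.degree ≤ (N : WithBot ℕ)},
            (multiplicity ℓ P : ℝ)) /
          (({P : Polynomial Fq | P ≠ 0 ∧ P.degree ≤ (N : WithBot ℕ)}).ncard : ℝ))
      Filter.atTop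
      (nhds (1 / ((Fintype.card Fq : ℝ) ^ ℓ.natDegree - 1))) := by
  have hq : (1 : ℝ) < Fintype.card Fq := mod_cast Fintype.one_lt_card
  have hcast (m : ℕ) :
      ((Fintype.card Fq ^ m - 1 : ℕ) : ℝ) = (Fintype.card Fq : ℝ) ^ m - 1 := by
    rw [Nat.cast_pred (Nat.pow_pos Fintype.card_pos), Nat.cast_pow]
  simp only [← natDegree_le_iff_degree_le]
  refine ((tendsto_sum_range_pow_sub_sub_one_div hq hirr.natDegree_pos).comp
    (tendsto_add_atTop_nat 1)).congr fun N => ?_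
  rw [Function.comp_apply, ← Nat.cast_finsum_mem (finite_setOf_ne_zero_natDegree_le N),
    finsum_multiplicity_setOf_ne_zero_natDegree_le hirr, ncard_setOf_ne_zero_natDegree_le]
  simp only [Nat.cast_sum, hcast]

/-- For `ℓ` monic irreducible in `F_q[t]`, the average of the `ℓ`-adic
valuation over nonzero polynomials of degree at most `N` tends, as `N → ∞`, to
`1/(q^{deg ℓ} - 1)`. -/
theorem average_valuation_nonzero_polynomials
    (Fq : Type*) [Field Fq] [Fintype Fq]
    (ℓ : Polynomial Fq) (hmonic : ℓ.Monic) (hirr : Irreducible ℓ) :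
    Filter.Tendsto
      (fun N : ℕ =>
        (∑ᶠ P ∈ {P : Polynomial Fq | P ≠ 0 ∧ P.degree ≤ (N : WithBot ℕ)},
            (multiplicity ℓ P : ℝ)) /
          (({P : Polynomial Fq | P ≠ 0 ∧ P.degree ≤ (N : WithBot ℕ)}).ncard : ℝ))
      Filter.atTop
      (nhds (1 / ((Fintype.card Fq : ℝ) ^ ℓ.natDegree - 1))) :=
  average_valuation_nonzero_polynomials_general Fq ℓ hirr
end

section
/- Let q be a prime power, ℓ ∈ F_q[t] monic irreducible, k ≥ 1 an integer, and r ∈ F_q[t] with deg r < k·deg ℓ. For pairs (a,b) ∈ F_q[t]² with ℓ ∤ gcd(a,b), write (a:b) ≡ r (mod ℓ^k) to mean: a ≡ br (mod ℓ^k) and ℓ ∤ b, in case ℓ ∤ r; or b ≡ ar (mod ℓ^k) and ℓ | b, in case ℓ | r. Then the density of such pairs among ℓ-coprime pairs exists and equals Norm(ℓ)^{−k} · Norm(ℓ)/(Norm(ℓ)+1); that is, lim_{N→∞} #{(a,b) : deg a, deg b ≤ N, ℓ ∤ gcd(a,b), (a:b) ≡ r mod ℓ^k} / #{(a,b) : deg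 a, deg b ≤ N, ℓ ∤ gcd(a,b)} = q^{−k·deg ℓ} · q^{deg ℓ}/(q^{deg ℓ}+1). -/
open Polynomial Filter

/-! The ratio is constant, equal to the limit, as soon as `N ≥ k · deg ℓ`. Among polynomials of
degree `< n`, a residue class modulo a monic `g` with `deg g ≤ n` is a translate of
`g · {u | deg u < n - deg g}`, so it has exactly `q ^ (n - deg g)` elements. With `n = N + 1`,
`d = deg ℓ`, this gives `q^{2n} - q^{2(n-d)}` coprime pairs. If `ℓ ∤ r`, a pair is counted
iff `ℓ ∤ b` and `a` lies in the class of `b r` mod `ℓ^k`; if `ℓ ∣ r`, then `ℓ ∣ b` is automatic,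
so a pair is counted iff `ℓ ∤ a` and `b` lies in the class of `a r`. Either way there are
`(q^n - q^{n-d}) q^{n-kd}` of them, and the quotient simplifies to `Q^{-k} Q / (Q + 1)`,
`Q = q^d`. -/

namespace Polynomial

variable {R : Type*} [CommRing R] {n : ℕ} {g : R[X]}

theorem degree_le_iff_degree_lt_succ (p : R[X]) (N : ℕ) :
    p.degree ≤ N ↔ p.degree < ↑(N + 1) := by
  rw [← mem_degreeLE, ← mem_degreeLT, degreeLT_succ_eq_degreeLE]

theorem ncard_setOf_degree_lt [Fintype R] (n : ℕ) :
    {p : R[X] | p.degree < n}.ncard = Fintype.card R ^ n := by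
  rw [← Nat.card_coe_set_eq, Nat.card_congr
    ((Equiv.setCongr (by ext; exact mem_degreeLT.symm)).trans (degreeLTEquiv R n).toEquiv)]
  simp

theorem finite_setOf_degree_lt [Finite R] (n : ℕ) : {p : R[X] | p.degree < n}.Finite := by
  have := Fintype.ofFinite R
  exact Set.finite_of_ncard_ne_zero (by rw [ncard_setOf_degree_lt]; positivity)

variable [Nontrivial R]

theorem Monic.degree_mul_lt_iff (hg : g.Monic) (hn : g.natDegree ≤ n) (u : R[X]) :
    (g * u).degree < n ↔ u.degree < ↑(n - g.natDegree) := by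
  rcases eq_or_ne u 0 with rfl | hu
  · simp
  rw [mul_comm, hg.degree_mul, degree_eq_natDegree hu, degree_eq_natDegree hg.ne_zero]
  norm_cast
  omega

theorem Monic.setOf_degree_lt_dvd_sub_eq_image (hg : g.Monic) (hn : g.natDegree ≤ n) (c : R[X]) :
    {a : R[X] | a.degree < n ∧ g ∣ a - c} =
      (fun u => c %ₘ g + g * u) '' {u | u.degree < ↑(n - g.natDegree)} := by
  have hrem : (c %ₘ g).degree < n := (degree_modByMonic_lt c hg).trans_le <| by
    rw [degree_eq_natDegree hg.ne_zero]; exact_mod_cast hn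
  have hc := modByMonic_add_div c g
  ext a
  simp only [Set.mem_ofPred_eq, Set.mem_image]
  constructor
  · rintro ⟨ha, v, hv⟩
    have ha' : a = c %ₘ g + g * (v + c /ₘ g) := by linear_combination hv - hc
    refine ⟨v + c /ₘ g, (hg.degree_mul_lt_iff hn _).1 ?_, ha'.symm⟩
    rw [show g * (v + c /ₘ g) = a - c %ₘ g by rw [ha']; ring]
    exact (degree_sub_le _ _).trans_lt (max_lt ha hrem)
  · rintro ⟨u, hu, rfl⟩
    refine ⟨(degree_add_le _ _).trans_lt (max_lt hrem ((hg.degree_mul_lt_iff hn u).2 hu)), ?_⟩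
    exact ⟨u - c /ₘ g, by linear_combination hc⟩

variable [Fintype R]

theorem Monic.ncard_setOf_degree_lt_dvd_sub (hg : g.Monic) (hn : g.natDegree ≤ n) (c : R[X]) :
    {a : R[X] | a.degree < n ∧ g ∣ a - c}.ncard = Fintype.card R ^ (n - g.natDegree) := by
  rw [hg.setOf_degree_lt_dvd_sub_eq_image hn, Set.ncard_image_of_injective _
    (fun _ _ h => hg.isRegular.left (add_left_cancel h)), ncard_setOf_degree_lt]

theorem Monic.ncard_setOf_degree_lt_not_dvd (hg : g.Monic) (hn : g.natDegree ≤ n) :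
    {a : R[X] | a.degree < n ∧ ¬ g ∣ a}.ncard =
      Fintype.card R ^ n - Fintype.card R ^ (n - g.natDegree) := by
  have hdiff : {a : R[X] | a.degree < n ∧ ¬ g ∣ a} =
      {a : R[X] | a.degree < n} \ {a : R[X] | a.degree < n ∧ g ∣ a - 0} := by
    ext
    simp only [Set.mem_ofPred_eq, Set.mem_sdiff, sub_zero]
    tauto
  rw [hdiff, Set.ncard_sdiff' (fun _ h => h.1) (finite_setOf_degree_lt n),
    ncard_setOf_degree_lt, hg.ncard_setOf_degree_lt_dvd_sub hn]

theorem Monic.ncard_pairs_dvd_sub (hg : g.Monic) (hn : g.natDegree ≤ n) (B : Set R[X])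
    (s : R[X]) :
    {ab : R[X] × R[X] | ab.2 ∈ B ∧ ab.1.degree < n ∧ g ∣ ab.1 - ab.2 * s}.ncard =
      B.ncard * Fintype.card R ^ (n - g.natDegree) := by
  have himage : {ab : R[X] × R[X] | ab.2 ∈ B ∧ ab.1.degree < n ∧ g ∣ ab.1 - ab.2 * s} =
      (fun x => ((x.1 * s) %ₘ g + g * x.2, x.1)) '' (B ×ˢ {u | u.degree < ↑(n - g.natDegree)}) := by
    ext ⟨a, b⟩
    have hfib := congrArg (a ∈ ·) (hg.setOf_degree_lt_dvd_sub_eq_image hn (b * s))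
    simp only [Set.mem_ofPred_eq, Set.mem_image] at hfib
    simp [hfib, and_assoc]
  rw [himage, Set.ncard_image_of_injective, Set.ncard_prod, ncard_setOf_degree_lt]
  rintro ⟨b, u⟩ ⟨b', u'⟩ h
  obtain ⟨hu, rfl : b = b'⟩ := Prod.mk.inj h
  exact congrArg (b, ·) (hg.isRegular.left (add_left_cancel hu))

theorem Monic.ncard_coprime_pairs (hg : g.Monic) (hn : g.natDegree ≤ n) :
    {ab : R[X] × R[X] | ab.1.degree < n ∧ ab.2.degree < n ∧ ¬(g ∣ ab.1 ∧ g ∣ ab.2)}.ncard =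
      Fintype.card R ^ n * Fintype.card R ^ n -
        Fintype.card R ^ (n - g.natDegree) * Fintype.card R ^ (n - g.natDegree) := by
  have hdiff : {ab : R[X] × R[X] | ab.1.degree < n ∧ ab.2.degree < n ∧ ¬(g ∣ ab.1 ∧ g ∣ ab.2)} =
      {a : R[X] | a.degree < n} ×ˢ {a : R[X] | a.degree < n} \
        {a : R[X] | a.degree < n ∧ g ∣ a - 0} ×ˢ {a : R[X] | a.degree < n ∧ g ∣ a - 0} := by
    ext
    simp only [Set.mem_ofPred_eq, Set.mem_sdiff, Set.mem_prod, sub_zero]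
    tauto
  have hsub : {a : R[X] | a.degree < n ∧ g ∣ a - 0} ⊆ {a : R[X] | a.degree < n} := fun _ h => h.1
  rw [hdiff, Set.ncard_sdiff' (Set.prod_mono hsub hsub)
    ((finite_setOf_degree_lt n).prod (finite_setOf_degree_lt n)), Set.ncard_prod, Set.ncard_prod,
    ncard_setOf_degree_lt, hg.ncard_setOf_degree_lt_dvd_sub hn]

theorem Monic.ncard_projective_congruence {ℓ : R[X]} (hℓ : ℓ.Monic) {k : ℕ} (hk : k ≠ 0)
    (hn : k * ℓ.natDegree ≤ n) (r : R[X]) :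
    {ab : R[X] × R[X] | ab.1.degree < n ∧ ab.2.degree < n ∧ ¬(ℓ ∣ ab.1 ∧ ℓ ∣ ab.2) ∧
      ((¬ ℓ ∣ r ∧ ℓ ^ k ∣ (ab.1 - ab.2 * r) ∧ ¬ ℓ ∣ ab.2) ∨
        (ℓ ∣ r ∧ ℓ ^ k ∣ (ab.2 - ab.1 * r) ∧ ℓ ∣ ab.2))}.ncard =
      (Fintype.card R ^ n - Fintype.card R ^ (n - ℓ.natDegree)) *
        Fintype.card R ^ (n - k * ℓ.natDegree) := by
  have hℓk : (ℓ ^ k).natDegree ≤ n := by rwa [hℓ.natDegree_pow]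
  have hℓn : ℓ.natDegree ≤ n := (Nat.le_mul_of_pos_left _ (Nat.pos_of_ne_zero hk)).trans hn
  rw [← hℓ.natDegree_pow, ← hℓ.ncard_setOf_degree_lt_not_dvd hℓn]
  by_cases hr : ℓ ∣ r
  · have hb : ∀ a b : R[X], ℓ ^ k ∣ b - a * r → ℓ ∣ b := fun a b h => by
      simpa using (dvd_pow_self ℓ hk).trans h |>.add (hr.mul_left a)
    rw [← (hℓ.pow k).ncard_pairs_dvd_sub hℓk, ← Set.ncard_preimage_of_injective_subset_range
      Prod.swap_injective (by simp [Prod.swap_surjective.range_eq])]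
    congr 1
    ext ⟨a, b⟩
    have := hb a b
    simp only [Set.mem_ofPred_eq, Set.mem_preimage, Prod.swap_prod_mk, hr]
    tauto
  · rw [← (hℓ.pow k).ncard_pairs_dvd_sub hℓk]
    congr 1
    ext ⟨a, b⟩
    simp only [Set.mem_ofPred_eq, hr]
    tauto

end Polynomial

theorem density_ratio_eq {x : ℝ} (hx : 1 < x) {d k n : ℕ} (hd : 0 < d) (hk : 0 < k)
    (hn : k * d ≤ n) :
    (x ^ n - x ^ (n - d)) * x ^ (n - k * d) / (x ^ n * x ^ n - x ^ (n - d) * x ^ (n - d)) =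
      ((x ^ d) ^ k)⁻¹ * (x ^ d / (x ^ d + 1)) := by
  obtain ⟨m, rfl⟩ := Nat.exists_eq_add_of_le hn
  obtain ⟨j, rfl⟩ : ∃ j, k = j + 1 := ⟨k - 1, by omega⟩
  have e1 : x ^ ((j + 1) * d + m) = x ^ m * (x ^ d) ^ j * x ^ d := by ring
  have e2 : x ^ ((j + 1) * d + m - d) = x ^ m * (x ^ d) ^ j := by
    rw [show (j + 1) * d + m - d = j * d + m by rw [add_mul]; omega]; ring
  rw [e1, e2, Nat.add_sub_cancel_left]
  have hy : 1 < x ^ d := one_lt_pow₀ hx hd.ne'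
  have hy2 : (x ^ d) ^ 2 - 1 ≠ 0 := by nlinarith
  field_simp
  ring

theorem density_projective_congruence_general
    (Fq : Type*) [Field Fq] [Fintype Fq]
    (ℓ : Polynomial Fq) (hmonic : ℓ.Monic) (hirr : Irreducible ℓ)
    (k : ℕ) (hk : 1 ≤ k)
    (r : Polynomial Fq) :
    Filter.Tendsto
      (fun N : ℕ =>
        (({ab : Polynomial Fq × Polynomial Fq |
            ab.1.degree ≤ (N : WithBot ℕ) ∧ ab.2.degree ≤ (N : WithBot ℕ) ∧
            ¬ (ℓ ∣ ab.1 ∧ ℓ ∣ ab.2) ∧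
            ((¬ ℓ ∣ r ∧ ℓ ^ k ∣ (ab.1 - ab.2 * r) ∧ ¬ ℓ ∣ ab.2) ∨
             (ℓ ∣ r ∧ ℓ ^ k ∣ (ab.2 - ab.1 * r) ∧ ℓ ∣ ab.2))}).ncard : ℝ) /
        (({ab : Polynomial Fq × Polynomial Fq |
            ab.1.degree ≤ (N : WithBot ℕ) ∧ ab.2.degree ≤ (N : WithBot ℕ) ∧
            ¬ (ℓ ∣ ab.1 ∧ ℓ ∣ ab.2)}).ncard : ℝ))
      Filter.atTop
      (nhds ((((Fintype.card Fq : ℝ) ^ ℓ.natDegree) ^ k)⁻¹ *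
        ((Fintype.card Fq : ℝ) ^ ℓ.natDegree / ((Fintype.card Fq : ℝ) ^ ℓ.natDegree + 1)))) := by
  refine tendsto_const_nhds.congr' ?_
  filter_upwards [eventually_ge_atTop (k * ℓ.natDegree)] with N hN
  have hd : 0 < ℓ.natDegree := hirr.natDegree_pos
  have hn : k * ℓ.natDegree ≤ N + 1 := by omega
  have hle : Fintype.card Fq ^ (N + 1 - ℓ.natDegree) ≤ Fintype.card Fq ^ (N + 1) :=
    Nat.pow_le_pow_right Fintype.card_pos (Nat.sub_le _ _)
  simp only [degree_le_iff_degree_lt_succ]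
  rw [hmonic.ncard_projective_congruence (by omega) hn r,
    hmonic.ncard_coprime_pairs ((Nat.le_mul_of_pos_left _ hk).trans hn),
    Nat.cast_mul, Nat.cast_sub hle, Nat.cast_sub (Nat.mul_le_mul hle hle)]
  push_cast
  exact (density_ratio_eq (by exact_mod_cast Fintype.one_lt_card) hd hk hn).symm

/-- Density of `ℓ`-coprime pairs `(a,b)` with `(a:b) ≡ r (mod ℓ^k)`:
if `ℓ ∤ r` this means `a ≡ b r (mod ℓ^k)` and `ℓ ∤ b`; if `ℓ ∣ r` it means
`b ≡ a r (mod ℓ^k)` and `ℓ ∣ b`.  The density among `ℓ`-coprime pairs equals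
`Norm(ℓ)^{-k} · Norm(ℓ)/(Norm(ℓ)+1)`. -/
theorem density_projective_congruence
    (Fq : Type*) [Field Fq] [Fintype Fq]
    (ℓ : Polynomial Fq) (hmonic : ℓ.Monic) (hirr : Irreducible ℓ)
    (k : ℕ) (hk : 1 ≤ k)
    (r : Polynomial Fq) (hr : r.degree < ((k * ℓ.natDegree : ℕ) : WithBot ℕ)) :
    Filter.Tendsto
      (fun N : ℕ =>
        (({ab : Polynomial Fq × Polynomial Fq |
            ab.1.degree ≤ (N : WithBot ℕ) ∧ ab.2.degree ≤ (N : WithBot ℕ) ∧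
            ¬ (ℓ ∣ ab.1 ∧ ℓ ∣ ab.2) ∧
            ((¬ ℓ ∣ r ∧ ℓ ^ k ∣ (ab.1 - ab.2 * r) ∧ ¬ ℓ ∣ ab.2) ∨
             (ℓ ∣ r ∧ ℓ ^ k ∣ (ab.2 - ab.1 * r) ∧ ℓ ∣ ab.2))}).ncard : ℝ) /
        (({ab : Polynomial Fq × Polynomial Fq |
            ab.1.degree ≤ (N : WithBot ℕ) ∧ ab.2.degree ≤ (N : WithBot ℕ) ∧
            ¬ (ℓ ∣ ab.1 ∧ ℓ ∣ ab.2)}).ncard : ℝ))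
      Filter.atTop
      (nhds ((((Fintype.card Fq : ℝ) ^ ℓ.natDegree) ^ k)⁻¹ *
        ((Fintype.card Fq : ℝ) ^ ℓ.natDegree / ((Fintype.card Fq : ℝ) ^ ℓ.natDegree + 1)))) :=
  density_projective_congruence_general Fq ℓ hmonic hirr k hk r
end

section
/- Let q ≥ 2 be a prime power and, for each integer k ≥ 1, let I_k denote the number of monic irreducible polynomials of degree k in F_q[t]. Then the series Σ_{k ≥ 1} k·I_k/(q^{2k} − 1) converges and its sum equals 1/(q − 1). -/
/-!
Since `X ^ q ^ n - X` is squarefree and its monic irreducible factors are exactly the monic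
irreducibles of degree dividing `n`, comparing degrees gives Gauss's formula
`∑_{d ∣ n} d I_d = q ^ n`. Expanding `1 / (q ^ {2k} - 1) = ∑_{m ≥ 1} q ^ {-2km}` and regrouping
the terms by `n = km` (a Lambert series; all terms are nonnegative, so this is done in `ℝ≥0∞`)
turns the series into `∑_{n ≥ 1} q ^ n q ^ {-2n} = 1 / (q - 1)`.
-/

open Polynomial UniqueFactorizationMonoid
open scoped ENNReal

namespace Polynomial

variable {K : Type*} [Field K]

theorem sum_natDegree_toFinset_normalizedFactors [DecidableEq K] {g : K[X]} (hg : Squarefree g) :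
    ∑ P ∈ (normalizedFactors g).toFinset, P.natDegree = g.natDegree := by
  rw [Finset.sum_eq_multiset_sum, Multiset.toFinset_val,
    Multiset.dedup_eq_self.mpr ((squarefree_iff_nodup_normalizedFactors hg.ne_zero).mp hg),
    ← natDegree_multiset_prod _ (zero_notMem_normalizedFactors _)]
  exact natDegree_eq_of_degree_eq <|
    degree_eq_degree_of_associated (prod_normalizedFactors hg.ne_zero)

end Polynomial

namespace ENNReal

theorem tsum_inv_pow_succ (z : ℝ≥0∞) : ∑' m : ℕ, z⁻¹ ^ (m + 1) = (z - 1)⁻¹ := by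
  rw [ENNReal.tsum_geometric_add_one]
  rcases eq_or_ne z 0 with rfl | hz0
  · simp
  rcases eq_or_ne z ⊤ with rfl | hzt
  · simp
  rw [← ENNReal.mul_inv (.inl hz0) (.inl hzt), ENNReal.mul_sub fun _ _ => hzt,
    mul_one, ENNReal.mul_inv_cancel hz0 hzt]

theorem hasSum_toReal_of_tsum_eq {α : Type*} {f : α → ℝ≥0∞} {c : ℝ≥0∞} (hf : ∑' x, f x = c)
    (hc : c ≠ ⊤) : HasSum (fun x => (f x).toReal) c.toReal := by
  subst hf
  simpa only [← tsum_toReal_eq (ENNReal.ne_top_of_tsum_ne_top hc)] using hasSum_toReal hc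

theorem tsum_mul_tsum_pow_eq_tsum_sum_divisors_mul_pow {a : ℕ → ℝ≥0∞} (ha : a 0 = 0) (x : ℝ≥0∞) :
    ∑' k, a k * ∑' m : ℕ, x ^ (k * (m + 1)) = ∑' n, (∑ d ∈ n.divisors, a d) * x ^ n := by
  let F (k n : ℕ) : ℝ≥0∞ := if k ∈ n.divisors then a k * x ^ n else 0
  have hrow (k : ℕ) : a k * ∑' m : ℕ, x ^ (k * (m + 1)) = ∑' n, F k n := by
    rcases eq_or_ne k 0 with rfl | hk
    · simp [F, ha]
    have hinj : Function.Injective fun m : ℕ => k * (m + 1) := fun m m' h => by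
      simpa [hk] using h
    have hsupp : Function.support (F k) ⊆ Set.range fun m : ℕ => k * (m + 1) := by
      intro n hn
      obtain ⟨⟨c, rfl⟩, hn0⟩ := Nat.mem_divisors.mp (by_contra fun h => hn (if_neg h))
      have hc : 0 < c := Nat.pos_of_ne_zero (right_ne_zero_of_mul hn0)
      exact ⟨c - 1, by simp only [Nat.sub_add_cancel hc]⟩
    rw [← hinj.tsum_eq hsupp, ← ENNReal.tsum_mul_left]
    exact tsum_congr fun m =>
      (if_pos (Nat.mem_divisors.mpr ⟨dvd_mul_right k _, by positivity⟩)).symm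
  have hcol (n : ℕ) : ∑' k, F k n = (∑ d ∈ n.divisors, a d) * x ^ n := by
    rw [tsum_eq_sum (s := n.divisors) fun k hk => if_neg hk, Finset.sum_mul]
    exact Finset.sum_congr rfl fun k hk => if_pos hk
  simp only [hrow, ← hcol]
  exact ENNReal.tsum_comm

end ENNReal

namespace FiniteField

variable {K : Type*} [Field K] [Finite K]

theorem separable_X_pow_card_pow_sub_X {n : ℕ} (hn : n ≠ 0) :
    (X ^ Nat.card K ^ n - X : K[X]).Separable := by
  have := Fintype.ofFinite K
  have hder : derivative (X ^ Nat.card K ^ n - X : K[X]) = -1 := by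
    rw [derivative_sub, derivative_X, derivative_X_pow, Nat.cast_pow, Nat.card_eq_fintype_card,
      FiniteField.cast_card_eq_zero K, zero_pow hn, C_0, zero_mul, zero_sub]
  rw [separable_def, hder]
  exact isCoprime_one_right.neg_right

theorem mem_normalizedFactors_X_pow_card_pow_sub_X [DecidableEq K] {n : ℕ} (hn : n ≠ 0)
    {P : K[X]} :
    P ∈ normalizedFactors (X ^ Nat.card K ^ n - X) ↔ P.Monic ∧ Irreducible P ∧ P.natDegree ∣ n := by
  rw [Polynomial.mem_normalizedFactors_iff (X_pow_card_pow_sub_X_ne_zero K hn Finite.one_lt_card)]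
  constructor
  · rintro ⟨hirr, hmonic, hdvd⟩
    exact ⟨hmonic, hirr, hirr.natDegree_dvd_iff_dvd_X_pow_card_pow_sub_X.mpr hdvd⟩
  · rintro ⟨hmonic, hirr, hdvd⟩
    exact ⟨hirr, hmonic, hirr.natDegree_dvd_iff_dvd_X_pow_card_pow_sub_X.mp hdvd⟩

theorem sum_divisors_mul_ncard_monic_irreducible {n : ℕ} (hn : n ≠ 0) :
    ∑ d ∈ n.divisors, d * {P : K[X] | P.Monic ∧ Irreducible P ∧ P.natDegree = d}.ncard =
      Nat.card K ^ n := by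
  classical
  set g : K[X] := X ^ Nat.card K ^ n - X
  set T := (normalizedFactors g).toFinset
  have hT (P : K[X]) : P ∈ T ↔ P.Monic ∧ Irreducible P ∧ P.natDegree ∣ n := by
    rw [Multiset.mem_toFinset, mem_normalizedFactors_X_pow_card_pow_sub_X hn]
  have hfiber {d : ℕ} (hd : d ∈ n.divisors) :
      {P : K[X] | P.Monic ∧ Irreducible P ∧ P.natDegree = d} = ↑(T.filter (·.natDegree = d)) := by
    ext P
    simp only [Set.mem_ofPred_eq, Finset.coe_filter, hT]
    constructor
    · rintro ⟨hmonic, hirr, rfl⟩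
      exact ⟨⟨hmonic, hirr, Nat.dvd_of_mem_divisors hd⟩, rfl⟩
    · rintro ⟨⟨hmonic, hirr, -⟩, rfl⟩
      exact ⟨hmonic, hirr, rfl⟩
  calc ∑ d ∈ n.divisors, d * {P : K[X] | P.Monic ∧ Irreducible P ∧ P.natDegree = d}.ncard
      = ∑ d ∈ n.divisors, ∑ P ∈ T with P.natDegree = d, P.natDegree := by
        refine Finset.sum_congr rfl fun d hd => ?_
        rw [hfiber hd, Set.ncard_coe_finset,
          Finset.sum_congr rfl fun P hP => (Finset.mem_filter.mp hP).2, Finset.sum_const,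
          smul_eq_mul, mul_comm]
    _ = ∑ P ∈ T, P.natDegree := Finset.sum_fiberwise_of_maps_to
        (fun P hP => Nat.mem_divisors.mpr ⟨((hT P).mp hP).2.2, hn⟩) _
    _ = Nat.card K ^ n := by
        rw [sum_natDegree_toFinset_normalizedFactors (separable_X_pow_card_pow_sub_X hn).squarefree,
          X_pow_card_pow_sub_X_natDegree_eq K hn Finite.one_lt_card]

theorem tsum_mul_ncard_monic_irreducible_mul_inv_pow_sub_one :
    ∑' k : ℕ, ((k * {P : K[X] | P.Monic ∧ Irreducible P ∧ P.natDegree = k}.ncard : ℕ) : ℝ≥0∞) *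
      ((Nat.card K : ℝ≥0∞) ^ (2 * k) - 1)⁻¹ = ((Nat.card K : ℝ≥0∞) - 1)⁻¹ := by
  set q : ℝ≥0∞ := (Nat.card K : ℝ≥0∞)
  have hq0 : q ≠ 0 := Nat.cast_ne_zero.mpr Nat.card_pos.ne'
  have hqt : q ≠ ⊤ := ENNReal.natCast_ne_top _
  set a : ℕ → ℝ≥0∞ := fun k =>
    (k * {P : K[X] | P.Monic ∧ Irreducible P ∧ P.natDegree = k}.ncard : ℕ)
  have hgauss (n : ℕ) : (∑ d ∈ (n + 1).divisors, a d) * (q ^ 2)⁻¹ ^ (n + 1) = q⁻¹ ^ (n + 1) := by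
    rw [← Nat.cast_sum, sum_divisors_mul_ncard_monic_irreducible n.succ_ne_zero, Nat.cast_pow,
      ← mul_pow, pow_two, ENNReal.mul_inv (.inl hq0) (.inl hqt), ← mul_assoc,
      ENNReal.mul_inv_cancel hq0 hqt, one_mul]
  calc ∑' k, a k * (q ^ (2 * k) - 1)⁻¹
      = ∑' k, a k * ∑' m : ℕ, (q ^ 2)⁻¹ ^ (k * (m + 1)) := by
        refine tsum_congr fun k => ?_
        rw [pow_mul, ← ENNReal.tsum_inv_pow_succ]
        simp only [pow_mul, ENNReal.inv_pow]
    _ = ∑' n, (∑ d ∈ n.divisors, a d) * (q ^ 2)⁻¹ ^ n :=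
        ENNReal.tsum_mul_tsum_pow_eq_tsum_sum_divisors_mul_pow (by simp [a]) _
    _ = ∑' n, q⁻¹ ^ (n + 1) := by
        rw [tsum_eq_zero_add' ENNReal.summable]
        simp only [Nat.divisors_zero, Finset.sum_empty, zero_mul, zero_add, hgauss]
    _ = (q - 1)⁻¹ := ENNReal.tsum_inv_pow_succ q

end FiniteField

/-- If `I_k` is the number of monic irreducible polynomials of degree `k`
over the finite field `F_q`, then `Σ_{k ≥ 1} k I_k / (q^{2k} - 1)` converges to `1/(q-1)`.
(The term at `k = 0` vanishes.) -/
theorem sum_irreducible_count_div (Fq : Type*) [Field Fq] [Fintype Fq] :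
    Summable (fun k : ℕ => (k : ℝ) *
        (({p : Polynomial Fq | p.Monic ∧ Irreducible p ∧ p.natDegree = k}).ncard : ℝ) /
        ((Fintype.card Fq : ℝ) ^ (2 * k) - 1)) ∧
    ∑' k : ℕ, (k : ℝ) *
        (({p : Polynomial Fq | p.Monic ∧ Irreducible p ∧ p.natDegree = k}).ncard : ℝ) /
        ((Fintype.card Fq : ℝ) ^ (2 * k) - 1) = 1 / ((Fintype.card Fq : ℝ) - 1) := by
  set q := Fintype.card Fq
  set I : ℕ → ℕ := fun k => {p : Polynomial Fq | p.Monic ∧ Irreducible p ∧ p.natDegree = k}.ncard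
  have hq : 1 ≤ (q : ℝ≥0∞) := by exact_mod_cast Fintype.card_pos
  have hsum : ∑' k : ℕ, ((k * I k : ℕ) : ℝ≥0∞) * ((q : ℝ≥0∞) ^ (2 * k) - 1)⁻¹ =
      ((q : ℝ≥0∞) - 1)⁻¹ := by
    simpa only [Nat.card_eq_fintype_card] using
      FiniteField.tsum_mul_ncard_monic_irreducible_mul_inv_pow_sub_one (K := Fq)
  have hfin : ((q : ℝ≥0∞) - 1)⁻¹ ≠ ⊤ := by
    simpa [tsub_eq_zero_iff_le] using Fintype.one_lt_card (α := Fq)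
  -- At `k = 0` both sides vanish, as `⊤.toReal = 0` and `x / 0 = 0`.
  have hterm (k : ℕ) : (((k * I k : ℕ) : ℝ≥0∞) * ((q : ℝ≥0∞) ^ (2 * k) - 1)⁻¹).toReal =
      (k : ℝ) * (I k : ℝ) / ((q : ℝ) ^ (2 * k) - 1) := by
    rw [ENNReal.toReal_mul, ENNReal.toReal_inv,
      ENNReal.toReal_sub_of_le (one_le_pow₀ hq) (ENNReal.pow_ne_top (ENNReal.natCast_ne_top _))]
    simp [div_eq_mul_inv]
  have hvalue : (((q : ℝ≥0∞) - 1)⁻¹).toReal = 1 / ((q : ℝ) - 1) := by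
    rw [ENNReal.toReal_inv, ENNReal.toReal_sub_of_le hq (ENNReal.natCast_ne_top _)]
    simp
  have hreal := ENNReal.hasSum_toReal_of_tsum_eq hsum hfin
  simp only [hterm, hvalue] at hreal
  exact ⟨hreal.summable, hreal.tsum_eq⟩
end

section
/- Let q be a prime power, f ∈ F_q[t][x], and k ≥ 1 an integer. Then k · #{(ℓ, r) : ℓ ∈ F_q[t] monic irreducible of degree k, r ∈ F_q[t] with deg r < k, and f(r) ≡ 0 (mod ℓ)} = #{(t_0, x_0) ∈ F_{q^k} × F_{q^k} : f(t_0, x_0) = 0 and t_0 generates F_{q^k} over F_q (i.e., t_0 lies in no proper subfield of F_{q^k})}, where f(t_0, x_0) denotes the evaluation of f at t = t_0 and x = x_0. -/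
/-!
A zero `(t₀, x₀)` of `f` with `t₀` generating `F_{q^k}` determines `ℓ = minpoly t₀`, monic
irreducible of degree `k`, and, as `1, t₀, …, t₀^(k-1)` is a basis of `F_{q^k}`, a unique `r` with
`deg r < k` and `r(t₀) = x₀`; then `f(t₀, r(t₀)) = f(r)(t₀)` vanishes exactly when `ℓ ∣ f(r)`.
Conversely every pair `(ℓ, r)` arises from each root of `ℓ` in `F_{q^k}`, and there are exactly `k`
of these: they correspond to the `F_q`-embeddings of `F_q[t]/ℓ` into `F_{q^k}`, which number `k`
because `F_{q^k}/F_q` is Galois.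
-/

open Polynomial

/-- Evaluation of `f ∈ F_q[t][x]` at `(t₀, x₀) ∈ F_{q^k}²`: evaluate each coefficient
(a polynomial in `t`) at `t₀` and then the resulting polynomial in `x` at `x₀`. -/
noncomputable def evalTX {Fq Fqk : Type*} [Field Fq] [Field Fqk] [Algebra Fq Fqk]
    (f : Polynomial (Polynomial Fq)) (t₀ x₀ : Fqk) : Fqk :=
  (f.map (Polynomial.aeval t₀).toRingHom).eval x₀

open Module

lemma Nat.card_sigma_of_card_eq {α : Type*} {β : α → Type*} [∀ a, Finite (β a)] {n : ℕ}
    (h : ∀ a, Nat.card (β a) = n) : Nat.card (Σ a, β a) = Nat.card α * n := by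
  rw [Nat.card_congr ((Equiv.sigmaCongrRight fun a => Finite.equivFinOfCardEq (h a)).trans
    (Equiv.sigmaEquivProd α (Fin n))), Nat.card_prod, Nat.card_fin]

section

variable {A B : Type*} [Field A] [Ring B] [Algebra A B] {x : B}

theorem eq_of_aeval_eq_of_degree_lt_minpoly {p q : A[X]} (hp : p.degree < (minpoly A x).degree)
    (hq : q.degree < (minpoly A x).degree) (h : aeval x p = aeval x q) : p = q := by
  by_contra hne
  have hle := minpoly.degree_le_of_ne_zero A x (sub_ne_zero.2 hne) (by rw [map_sub, h, sub_self])
  exact hle.not_gt ((degree_sub_le p q).trans_lt (max_lt hp hq))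

theorem IsIntegral.exists_degree_lt_minpoly_aeval_eq (hx : IsIntegral A x) {y : B}
    (hy : y ∈ Algebra.adjoin A {x}) :
    ∃ p : A[X], p.degree < (minpoly A x).degree ∧ aeval x p = y := by
  rw [Algebra.adjoin_singleton_eq_range_aeval] at hy
  obtain ⟨p, rfl⟩ := hy
  exact ⟨p %ₘ minpoly A x, degree_modByMonic_lt _ (minpoly.monic hx),
    minpoly.aeval_modByMonic_minpoly p x⟩

end

section

variable {F K : Type*} [Field F] [Field K] [Algebra F K]

lemma evalTX_aeval (f : F[X][X]) (t : K) (r : F[X]) :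
    evalTX f t (aeval t r) = aeval t (f.eval r) := by
  rw [evalTX, eval_map]
  exact eval₂_at_apply _ r

theorem Algebra.adjoin_singleton_eq_top_iff_natDegree_minpoly [FiniteDimensional F K] (t : K) :
    Algebra.adjoin F {t} = ⊤ ↔ (minpoly F t).natDegree = finrank F K := by
  rw [← IntermediateField.adjoin_eq_top_iff_of_isAlgebraic (by simpa using .of_finite F t),
    Field.primitive_element_iff_minpoly_natDegree_eq]

theorem Irreducible.natCard_aroots_of_natDegree_dvd [Finite K] {ℓ : F[X]} (hℓ : Irreducible ℓ)
    (hdvd : ℓ.natDegree ∣ finrank F K) : Nat.card {t : K // t ∈ ℓ.aroots K} = ℓ.natDegree := by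
  have : Fact (Irreducible ℓ) := ⟨hℓ⟩
  have hrank : finrank F (AdjoinRoot ℓ) = ℓ.natDegree := finrank_quotient_span_eq_natDegree
  rw [← Nat.card_congr (AdjoinRoot.equiv K F ℓ hℓ.ne_zero),
    FiniteField.natCard_algHom_of_finrank_dvd (hrank ▸ hdvd), hrank]

def rootPairs (f : F[X][X]) (k : ℕ) : Set (F[X] × F[X]) :=
  {lr | lr.1.Monic ∧ Irreducible lr.1 ∧ lr.1.natDegree = k ∧ lr.2.degree < (k : WithBot ℕ) ∧
    lr.1 ∣ f.eval lr.2}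

variable (F K) in
def generatingZeros (f : F[X][X]) : Set (K × K) :=
  {tx | evalTX f tx.1 tx.2 = 0 ∧ Algebra.adjoin F {tx.1} = ⊤}

variable [FiniteDimensional F K] {f : F[X][X]}

lemma mk_aeval_mem_generatingZeros {ℓ r : F[X]} (hlr : (ℓ, r) ∈ rootPairs f (finrank F K))
    {t : K} (ht : t ∈ ℓ.aroots K) : (t, aeval t r) ∈ generatingZeros F K f := by
  obtain ⟨hm, hi, hd, -, hdvd⟩ := hlr
  have hmin : ℓ = minpoly F t := minpoly.eq_of_irreducible_of_monic hi (mem_aroots.1 ht).2 hm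
  refine ⟨?_, ?_⟩
  · rw [evalTX_aeval, ← minpoly.dvd_iff, ← hmin]
    exact hdvd
  · rw [Algebra.adjoin_singleton_eq_top_iff_natDegree_minpoly, ← hmin, hd]

variable (F K) in
noncomputable def rootPairsSigmaToGeneratingZeros (f : F[X][X]) :
    (Σ lr : rootPairs f (finrank F K), {t : K // t ∈ lr.1.1.aroots K}) → generatingZeros F K f :=
  fun p => ⟨(p.2, aeval p.2.1 p.1.1.2), mk_aeval_mem_generatingZeros p.1.2 p.2.2⟩

lemma bijective_rootPairsSigmaToGeneratingZeros (f : F[X][X]) :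
    Function.Bijective (rootPairsSigmaToGeneratingZeros F K f) := by
  constructor
  · rintro ⟨⟨⟨ℓ, r⟩, hm, hi, hd, hr, _⟩, t, ht⟩ ⟨⟨⟨ℓ', r'⟩, hm', hi', _, hr', _⟩, t', ht'⟩ h
    simp only [rootPairsSigmaToGeneratingZeros, Subtype.mk.injEq, Prod.mk.injEq] at h
    obtain ⟨rfl, hx⟩ := h
    have hmin := minpoly.eq_of_irreducible_of_monic hi (mem_aroots.1 ht).2 hm
    obtain rfl : ℓ = ℓ' :=
      hmin.trans (minpoly.eq_of_irreducible_of_monic hi' (mem_aroots.1 ht').2 hm').symm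
    have hdeg : ((finrank F K : ℕ) : WithBot ℕ) = (minpoly F t).degree := by
      rw [← hmin, degree_eq_natDegree hm.ne_zero, hd]
    obtain rfl : r = r' := eq_of_aeval_eq_of_degree_lt_minpoly (hdeg ▸ hr) (hdeg ▸ hr') hx
    rfl
  · rintro ⟨⟨t, x⟩, hzero, hgen⟩
    have hint := IsIntegral.of_finite F t
    have hd := (Algebra.adjoin_singleton_eq_top_iff_natDegree_minpoly t).1 hgen
    obtain ⟨r, hr, rfl⟩ :=
      hint.exists_degree_lt_minpoly_aeval_eq (y := x) (hgen ▸ Algebra.mem_top)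
    rw [degree_eq_natDegree (minpoly.ne_zero hint), hd] at hr
    refine ⟨⟨⟨(minpoly F t, r), minpoly.monic hint, minpoly.irreducible hint, hd, hr, ?_⟩, t,
      mem_aroots.2 ⟨minpoly.ne_zero hint, minpoly.aeval F t⟩⟩, rfl⟩
    exact minpoly.dvd F t (by rwa [← evalTX_aeval])

end

theorem count_root_pairs_eq_points_general
    (Fq : Type*) [Field Fq]
    (f : Polynomial (Polynomial Fq)) (k : ℕ)
    (Fqk : Type*) [Field Fqk] [Fintype Fqk] [Algebra Fq Fqk]
    (hrank : Module.finrank Fq Fqk = k) :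
    k * Nat.card {lr : Polynomial Fq × Polynomial Fq |
        lr.1.Monic ∧ Irreducible lr.1 ∧ lr.1.natDegree = k ∧
        lr.2.degree < (k : WithBot ℕ) ∧ lr.1 ∣ f.eval lr.2} =
      Nat.card {tx : Fqk × Fqk |
        evalTX f tx.1 tx.2 = 0 ∧ Algebra.adjoin Fq {tx.1} = ⊤} := by
  subst hrank
  have : FiniteDimensional Fq Fqk := .of_finite
  change finrank Fq Fqk * Nat.card (rootPairs f (finrank Fq Fqk)) =
    Nat.card (generatingZeros Fq Fqk f)
  rw [← Nat.card_eq_of_bijective _ (bijective_rootPairsSigmaToGeneratingZeros f),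
    Nat.card_sigma_of_card_eq fun lr => ?_, mul_comm]
  obtain ⟨-, hi, hd, -⟩ := lr.2
  rw [hi.natCard_aroots_of_natDegree_dvd (dvd_of_eq hd), hd]

/-- `k` times the number of pairs `(ℓ, r)` with `ℓ` monic irreducible of
degree `k`, `deg r < k` and `f(r) ≡ 0 (mod ℓ)`, equals the number of points
`(t₀, x₀) ∈ F_{q^k}²` with `f(t₀, x₀) = 0` and `t₀` generating `F_{q^k}` over `F_q`. -/
theorem count_root_pairs_eq_points
    (Fq : Type*) [Field Fq] [Fintype Fq]
    (f : Polynomial (Polynomial Fq)) (k : ℕ) (hk : 1 ≤ k)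
    (Fqk : Type*) [Field Fqk] [Fintype Fqk] [Algebra Fq Fqk]
    (hrank : Module.finrank Fq Fqk = k) :
    k * Nat.card {lr : Polynomial Fq × Polynomial Fq |
        lr.1.Monic ∧ Irreducible lr.1 ∧ lr.1.natDegree = k ∧
        lr.2.degree < (k : WithBot ℕ) ∧ lr.1 ∣ f.eval lr.2} =
      Nat.card {tx : Fqk × Fqk |
        evalTX f tx.1 tx.2 = 0 ∧ Algebra.adjoin Fq {tx.1} = ⊤} :=
  count_root_pairs_eq_points_general Fq f k Fqk hrank
end

section
/- Let q be a prime power and f = Σ_{i=0}^a f_i x^i ∈ F_q[t][x] a C_{a,b} polynomial: a = deg_x f ≥ 2, f_a ≠ 0, f_0 ≠ 0, b := deg f_0 − deg f_a > 0, gcd(a,b) = 1, and for every i with 1 ≤ i ≤ a−1 and f_i ≠ 0, a·deg f_i < a·deg f_a + (a−i)·b. Then for every nonzero Laurent series r ∈ F_q((1/t)), deg f(r) = max_{0 ≤ i ≤ a} deg(f_i r^i) (with the convention deg 0 = −∞); in particular f has no root in F_q((1/t)) \ {0}, and f has no Laurent roots. -/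
open Polynomial

/-- The embedding `F_q[t] → F_q((1/t))`, sending `t` to the inverse of the variable of the
Laurent series field (so the variable of `LaurentSeries Fq` plays the role of `1/t`). -/
noncomputable def polyToInvLaurent (Fq : Type*) [Field Fq] :
    Polynomial Fq →+* LaurentSeries Fq :=
  Polynomial.eval₂RingHom (HahnSeries.C) (HahnSeries.single (-1 : ℤ) (1 : Fq))

open scoped Classical in
/-- The degree of an element of `F_q((1/t))`: minus its `1/t`-adic valuation,
with `deg 0 = ⊥`. -/
noncomputable def laurentDeg {Fq : Type*} [Field Fq] (x : LaurentSeries Fq) : WithBot ℤ :=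
  if x = 0 then ⊥ else ((-x.order : ℤ) : WithBot ℤ)

/-!
Put `d = deg r`. The term `f_i r^i` has degree `deg f_i + i d`, and the `C_{a,b}` inequalities
say that the points `(i, deg f_i)` with `0 < i < a` lie strictly below the chord from
`(0, deg f_0)` to `(a, deg f_a)`. Adding the linear function `i d` preserves this, so the largest
of the degrees `deg f_i + i d` is attained at `i = 0` or `i = a`, and only once: a tie
`deg f_0 = deg f_a + a d` would give `a ∣ b`, impossible as `gcd(a, b) = 1` and `a ≥ 2`. By the
ultrametric inequality a sum with a unique term of maximal degree has the degree of that term,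
and in particular does not vanish.
-/

section LaurentDegree

variable {K : Type*} [Field K]

@[simp]
lemma laurentDeg_zero : laurentDeg (0 : LaurentSeries K) = ⊥ := if_pos rfl

lemma laurentDeg_of_ne_zero {x : LaurentSeries K} (hx : x ≠ 0) :
    laurentDeg x = ((-x.order : ℤ) : WithBot ℤ) :=
  if_neg hx

@[simp]
lemma laurentDeg_eq_bot_iff {x : LaurentSeries K} : laurentDeg x = ⊥ ↔ x = 0 := by
  rcases eq_or_ne x 0 with rfl | hx
  · simp
  · simp [laurentDeg_of_ne_zero hx, hx]

lemma laurentDeg_le_laurentDeg_iff {x y : LaurentSeries K} :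
    laurentDeg x ≤ laurentDeg y ↔ y.orderTop ≤ x.orderTop := by
  rcases eq_or_ne x 0 with rfl | hx
  · simp
  rcases eq_or_ne y 0 with rfl | hy
  · simp [laurentDeg_of_ne_zero hx, hx]
  rw [laurentDeg_of_ne_zero hx, laurentDeg_of_ne_zero hy,
    ← HahnSeries.order_eq_orderTop_of_ne_zero hx, ← HahnSeries.order_eq_orderTop_of_ne_zero hy,
    WithBot.coe_le_coe, WithTop.coe_le_coe, neg_le_neg_iff]

lemma laurentDeg_lt_laurentDeg_iff {x y : LaurentSeries K} :
    laurentDeg x < laurentDeg y ↔ y.orderTop < x.orderTop := by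
  simp only [lt_iff_not_ge, laurentDeg_le_laurentDeg_iff]

lemma laurentDeg_single {g : ℤ} {c : K} (hc : c ≠ 0) :
    laurentDeg (HahnSeries.single g c : LaurentSeries K) = ((-g : ℤ) : WithBot ℤ) := by
  rw [laurentDeg_of_ne_zero (HahnSeries.single_ne_zero hc), HahnSeries.order_single hc]

lemma laurentDeg_mul (x y : LaurentSeries K) :
    laurentDeg (x * y) = laurentDeg x + laurentDeg y := by
  rcases eq_or_ne x 0 with rfl | hx
  · simp
  rcases eq_or_ne y 0 with rfl | hy
  · simp
  rw [laurentDeg_of_ne_zero hx, laurentDeg_of_ne_zero hy, laurentDeg_of_ne_zero (mul_ne_zero hx hy),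
    HahnSeries.order_mul hx hy, neg_add, WithBot.coe_add]

lemma laurentDeg_pow (x : LaurentSeries K) (n : ℕ) : laurentDeg (x ^ n) = n • laurentDeg x := by
  induction n with
  | zero => simp [laurentDeg_of_ne_zero one_ne_zero]
  | succ n ih => rw [pow_succ, laurentDeg_mul, ih, succ_nsmul]

lemma laurentDeg_add_le (x y : LaurentSeries K) :
    laurentDeg (x + y) ≤ max (laurentDeg x) (laurentDeg y) := by
  rw [le_max_iff, laurentDeg_le_laurentDeg_iff, laurentDeg_le_laurentDeg_iff, ← min_le_iff]
  exact HahnSeries.min_orderTop_le_orderTop_add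

lemma laurentDeg_add_eq_left_of_lt {x y : LaurentSeries K} (h : laurentDeg y < laurentDeg x) :
    laurentDeg (x + y) = laurentDeg x := by
  have h_orderTop := HahnSeries.orderTop_add_eq_left (laurentDeg_lt_laurentDeg_iff.mp h)
  exact le_antisymm (laurentDeg_le_laurentDeg_iff.mpr h_orderTop.ge)
    (laurentDeg_le_laurentDeg_iff.mpr h_orderTop.le)

lemma laurentDeg_sum_le {ι : Type*} (s : Finset ι) (F : ι → LaurentSeries K) :
    laurentDeg (∑ i ∈ s, F i) ≤ s.sup fun i => laurentDeg (F i) := by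
  classical
  induction s using Finset.induction with
  | empty => simp
  | insert j s hj ih =>
    rw [Finset.sum_insert hj, Finset.sup_insert]
    exact (laurentDeg_add_le _ _).trans (max_le_max le_rfl ih)

lemma laurentDeg_sum_eq_of_lt {ι : Type*} {s : Finset ι} {F : ι → LaurentSeries K} {j : ι}
    (hj : j ∈ s) (h : ∀ i ∈ s, i ≠ j → laurentDeg (F i) < laurentDeg (F j)) :
    laurentDeg (∑ i ∈ s, F i) = laurentDeg (F j) := by
  classical
  rw [← Finset.add_sum_erase _ _ hj]
  rcases (s.erase j).eq_empty_or_nonempty with hs | ⟨i, hi⟩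
  · rw [hs, Finset.sum_empty, add_zero]
  have h_bot : ⊥ < laurentDeg (F j) :=
    bot_le.trans_lt (h i (Finset.mem_of_mem_erase hi) (Finset.ne_of_mem_erase hi))
  refine laurentDeg_add_eq_left_of_lt ((laurentDeg_sum_le _ _).trans_lt ?_)
  exact (Finset.sup_lt_iff h_bot).mpr fun i hi =>
    h i (Finset.mem_of_mem_erase hi) (Finset.ne_of_mem_erase hi)

lemma laurentDeg_sum_eq_sup_of_lt {ι : Type*} {s : Finset ι} {F : ι → LaurentSeries K} {j : ι}
    (hj : j ∈ s) (h : ∀ i ∈ s, i ≠ j → laurentDeg (F i) < laurentDeg (F j)) :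
    laurentDeg (∑ i ∈ s, F i) = s.sup fun i => laurentDeg (F i) := by
  rw [laurentDeg_sum_eq_of_lt hj h]
  refine le_antisymm (Finset.le_sup (f := fun i => laurentDeg (F i)) hj)
    (Finset.sup_le fun i hi => ?_)
  rcases eq_or_ne i j with rfl | hij
  · exact le_rfl
  · exact (h i hi hij).le

lemma polyToInvLaurent_eq_sum (p : K[X]) :
    polyToInvLaurent K p =
      ∑ j ∈ Finset.range (p.natDegree + 1), HahnSeries.single (-(j : ℤ)) (p.coeff j) := by
  rw [polyToInvLaurent, coe_eval₂RingHom, eval₂_eq_sum_range]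
  refine Finset.sum_congr rfl fun j _ => ?_
  rw [HahnSeries.single_pow, HahnSeries.C_apply, HahnSeries.single_mul_single, one_pow, zero_add,
    mul_one, smul_neg, nsmul_one]

lemma laurentDeg_polyToInvLaurent {p : K[X]} (hp : p ≠ 0) :
    laurentDeg (polyToInvLaurent K p) = (p.natDegree : ℤ) := by
  have hlead : p.coeff p.natDegree ≠ 0 := leadingCoeff_ne_zero.mpr hp
  rw [polyToInvLaurent_eq_sum, laurentDeg_sum_eq_of_lt (Finset.self_mem_range_succ _),
    laurentDeg_single hlead, neg_neg]
  intro i hi hne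
  rw [laurentDeg_single hlead, neg_neg]
  rcases eq_or_ne (p.coeff i) 0 with hc | hc
  · simp [hc]
  · rw [laurentDeg_single hc, neg_neg, WithBot.coe_lt_coe, Nat.cast_lt]
    exact lt_of_le_of_ne (Nat.lt_succ_iff.mp (Finset.mem_range.mp hi)) hne

lemma laurentDeg_polyToInvLaurent_mul_pow {p : K[X]} (hp : p ≠ 0) {r : LaurentSeries K}
    (hr : r ≠ 0) (n : ℕ) :
    laurentDeg (polyToInvLaurent K p * r ^ n) = ((p.natDegree + n * -r.order : ℤ) : WithBot ℤ) := by
  rw [laurentDeg_mul, laurentDeg_pow, laurentDeg_polyToInvLaurent hp, laurentDeg_of_ne_zero hr,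
    ← WithBot.coe_nsmul, ← WithBot.coe_add, nsmul_eq_mul]

lemma laurentDeg_polyToInvLaurent_mul_pow_lt {p q : K[X]} {r : LaurentSeries K} (hq : q ≠ 0)
    (hr : r ≠ 0) {m n : ℕ}
    (h : p ≠ 0 → (p.natDegree : ℤ) + m * -r.order < q.natDegree + n * -r.order) :
    laurentDeg (polyToInvLaurent K p * r ^ m) < laurentDeg (polyToInvLaurent K q * r ^ n) := by
  rw [laurentDeg_polyToInvLaurent_mul_pow hq hr]
  rcases eq_or_ne p 0 with rfl | hp
  · simp
  · rw [laurentDeg_polyToInvLaurent_mul_pow hp hr, WithBot.coe_lt_coe]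
    exact h hp

end LaurentDegree

lemma lt_max_of_mul_lt_chord {R : Type*} [CommRing R] [LinearOrder R] [IsStrictOrderedRing R]
    {a i y u v : R} (hi : 0 ≤ i) (hia : i ≤ a) (h : a * y < (a - i) * u + i * v) :
    y < max u v := by
  nlinarith [le_max_left u v, le_max_right u v]

lemma exists_endpoint_lt_of_lt_chord {a : ℕ} {e : ℕ → ℤ} {P : ℕ → Prop} (hend : e 0 ≠ e a)
    (hchord : ∀ i, 0 < i → i < a → P i → (a : ℤ) * e i < (a - i) * e 0 + i * e a) :
    ∃ j, (j = 0 ∨ j = a) ∧ ∀ i ≤ a, i ≠ j → P i → e i < e j := by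
  have hmid : ∀ i, 0 < i → i < a → P i → e i < max (e 0) (e a) := fun i hi0 hia hP =>
    lt_max_of_mul_lt_chord (Nat.cast_nonneg i) (by exact_mod_cast hia.le) (hchord i hi0 hia hP)
  rcases hend.lt_or_gt with h | h
  · refine ⟨a, .inr rfl, fun i hia hij hP => ?_⟩
    rcases Nat.eq_zero_or_pos i with rfl | hi0
    · exact h
    · simpa [max_eq_right h.le] using hmid i hi0 (by omega) hP
  · refine ⟨0, .inl rfl, fun i hia hij hP => ?_⟩
    rcases Nat.lt_or_eq_of_le hia with hia | rfl
    · simpa [max_eq_left h.le] using hmid i (by omega) hia hP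
    · exact h

lemma cab_exists_dominant_index {a : ℕ} (ha2 : 2 ≤ a) {b : ℤ} (hgcd : Int.gcd (a : ℤ) b = 1)
    {D : ℕ → ℤ} {P : ℕ → Prop} (hb : b = D 0 - D a)
    (hCab : ∀ i : ℕ, 1 ≤ i → i ≤ a - 1 → P i → (a : ℤ) * D i < a * D a + (a - i) * b) (d : ℤ) :
    ∃ j, (j = 0 ∨ j = a) ∧ ∀ i ≤ a, i ≠ j → P i → D i + i * d < D j + j * d := by
  refine exists_endpoint_lt_of_lt_chord (e := fun i => D i + i * d) (fun htie => ?_)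
    fun i hi0 hia hP => ?_
  · have hdvd : (a : ℤ) ∣ b := ⟨d, by push_cast at htie; linarith⟩
    rw [Int.gcd_eq_natAbs_left_iff_dvd.mpr hdvd, Int.natAbs_natCast] at hgcd
    omega
  · have := hCab i hi0 (by omega) hP
    subst hb
    push_cast
    linear_combination this

theorem cab_no_laurent_roots_general
    (Fq : Type*) [Field Fq]
    (f : Polynomial (Polynomial Fq)) (a : ℕ) (ha : f.natDegree = a) (ha2 : 2 ≤ a)
    (hfa : f.coeff a ≠ 0) (hf0 : f.coeff 0 ≠ 0)
    (b : ℤ) (hb : b = ((f.coeff 0).natDegree : ℤ) - ((f.coeff a).natDegree : ℤ))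
    (hgcd : Int.gcd (a : ℤ) b = 1)
    (hCab : ∀ i : ℕ, 1 ≤ i → i ≤ a - 1 → f.coeff i ≠ 0 →
      (a : ℤ) * ((f.coeff i).natDegree : ℤ) <
        (a : ℤ) * ((f.coeff a).natDegree : ℤ) + ((a : ℤ) - (i : ℤ)) * b) :
    (∀ r : LaurentSeries Fq, r ≠ 0 →
      laurentDeg (f.eval₂ (polyToInvLaurent Fq) r) =
        (Finset.range (a + 1)).sup
          (fun i => laurentDeg ((polyToInvLaurent Fq) (f.coeff i) * r ^ i))) ∧
    (∀ r : LaurentSeries Fq, r ≠ 0 → f.eval₂ (polyToInvLaurent Fq) r ≠ 0) := by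
  set φ := polyToInvLaurent Fq
  have hsum : ∀ r, f.eval₂ φ r = ∑ i ∈ Finset.range (a + 1), φ (f.coeff i) * r ^ i :=
    fun r => ha ▸ eval₂_eq_sum_range φ r
  have hdom : ∀ r : LaurentSeries Fq, r ≠ 0 → ∃ j ∈ Finset.range (a + 1),
      φ (f.coeff j) * r ^ j ≠ 0 ∧ ∀ i ∈ Finset.range (a + 1), i ≠ j →
        laurentDeg (φ (f.coeff i) * r ^ i) < laurentDeg (φ (f.coeff j) * r ^ j) := by
    intro r hr
    obtain ⟨j, hj, hmax⟩ := cab_exists_dominant_index (D := fun i => ((f.coeff i).natDegree : ℤ))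
      (P := fun i => f.coeff i ≠ 0) ha2 hgcd hb hCab (-r.order)
    have hfj : f.coeff j ≠ 0 := by rcases hj with rfl | rfl <;> assumption
    refine ⟨j, Finset.mem_range_succ_iff.mpr (by omega), ?_, fun i hi hij =>
      laurentDeg_polyToInvLaurent_mul_pow_lt hfj hr (hmax i (Finset.mem_range_succ_iff.mp hi) hij)⟩
    rw [ne_eq, ← laurentDeg_eq_bot_iff, laurentDeg_polyToInvLaurent_mul_pow hfj hr]
    exact WithBot.coe_ne_bot
  refine ⟨fun r hr => ?_, fun r hr => ?_⟩ <;> obtain ⟨j, hj, hj0, hlt⟩ := hdom r hr <;> rw [hsum]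
  · exact laurentDeg_sum_eq_sup_of_lt hj hlt
  · rwa [ne_eq, ← laurentDeg_eq_bot_iff, laurentDeg_sum_eq_of_lt hj hlt, laurentDeg_eq_bot_iff]

/-- For a `C_{a,b}` polynomial `f = Σ_{i=0}^a f_i x^i ∈ F_q[t][x]`
(`a = deg_x f ≥ 2`, `f_a, f_0 ≠ 0`, `b = deg f_0 - deg f_a > 0`, `gcd(a,b) = 1`, and
`a · deg f_i < a · deg f_a + (a-i) · b` for `1 ≤ i ≤ a-1` with `f_i ≠ 0`), for every
nonzero `r ∈ F_q((1/t))` we have `deg f(r) = max_i deg (f_i r^i)`; in particular `f` has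
no nonzero root in `F_q((1/t))` (hence no Laurent roots). -/
theorem cab_no_laurent_roots
    (Fq : Type*) [Field Fq]
    (f : Polynomial (Polynomial Fq)) (a : ℕ) (ha : f.natDegree = a) (ha2 : 2 ≤ a)
    (hfa : f.coeff a ≠ 0) (hf0 : f.coeff 0 ≠ 0)
    (b : ℤ) (hb : b = ((f.coeff 0).natDegree : ℤ) - ((f.coeff a).natDegree : ℤ))
    (hbpos : 0 < b) (hgcd : Int.gcd (a : ℤ) b = 1)
    (hCab : ∀ i : ℕ, 1 ≤ i → i ≤ a - 1 → f.coeff i ≠ 0 →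
      (a : ℤ) * ((f.coeff i).natDegree : ℤ) <
        (a : ℤ) * ((f.coeff a).natDegree : ℤ) + ((a : ℤ) - (i : ℤ)) * b) :
    (∀ r : LaurentSeries Fq, r ≠ 0 →
      laurentDeg (f.eval₂ (polyToInvLaurent Fq) r) =
        (Finset.range (a + 1)).sup
          (fun i => laurentDeg ((polyToInvLaurent Fq) (f.coeff i) * r ^ i))) ∧
    (∀ r : LaurentSeries Fq, r ≠ 0 → f.eval₂ (polyToInvLaurent Fq) r ≠ 0) :=
  cab_no_laurent_roots_general Fq f a ha ha2 hfa hf0 b hb hgcd hCab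
end
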